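/- Let G be a connected graph on at least three vertices, let u be a vertex of maximum degree and v a vertex of second largest degree d₂. If u and v are not adjacent and have no common neighbor, then the second largest Laplacian eigenvalue satisfies μ₂(G) ≥ d₂ + 1. -/

import Mathlib

/-!
For `z = a x_u + b x_v`, with `x_w = d(w) e_w - 1_{N(w)}` the star vector at `w`, the edges at the
independent pair `u, v` alone give `zᵀ L z ≥ a² d(u) (d(u)+1)² + b² d(v) (d(v)+1)²`; since the
closed neighbourhoods of `u` and `v` are disjoint, `x_u ⊥ x_v` and
`‖z‖² = a² d(u) (d(u)+1) + b² d(v) (d(v)+1)`. As `d(v) ≤ d(u)`, the Rayleigh quotient is at least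
`d(v) + 1` on the plane spanned by `x_u, x_v`, and the min-max principle bounds `μ₂` below by it.
-/

open scoped Classical in
/-- The multiset of Laplacian eigenvalues (roots of the characteristic polynomial of `L = D - A`). -/
noncomputable def lapSpectrum {V : Type*} [Fintype V] (G : SimpleGraph V) : Multiset ℝ :=
  (G.lapMatrix ℝ).charpoly.roots

/-- The Laplacian eigenvalues listed in nonincreasing order. -/
noncomputable def lapEigs {V : Type*} [Fintype V] (G : SimpleGraph V) : List ℝ :=
  ((lapSpectrum G).sort (· ≤ ·)).reverse

/-- `lapEig G k` is `μ_k(G)`, the `k`-th largest Laplacian eigenvalue (`k = 1, …, n`). -/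
noncomputable def lapEig {V : Type*} [Fintype V] (G : SimpleGraph V) (k : ℕ) : ℝ :=
  (lapEigs G).getD (k - 1) 0

open scoped Classical in
/-- The number of Laplacian eigenvalues (with multiplicity) satisfying predicate `p`. -/
noncomputable def lapCount {V : Type*} [Fintype V] (G : SimpleGraph V) (p : ℝ → Prop) : ℕ :=
  ((lapSpectrum G).filter p).card

open Module RCLike InnerProductSpace Matrix

namespace LinearMap.IsSymmetric

variable {𝕜 E : Type*} [RCLike 𝕜] [NormedAddCommGroup E] [InnerProductSpace 𝕜 E]
  [FiniteDimensional 𝕜 E] {T : E →ₗ[𝕜] E} (hT : T.IsSymmetric) {n : ℕ} (hn : finrank 𝕜 E = n)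

theorem re_inner_apply_self_eq_sum (z : E) :
    re ⟪T z, z⟫_𝕜 = ∑ j, hT.eigenvalues hn j * ‖(hT.eigenvectorBasis hn).repr z j‖ ^ 2 := by
  rw [← (hT.eigenvectorBasis hn).repr.inner_map_map, PiLp.inner_apply, map_sum]
  refine Finset.sum_congr rfl fun j _ => ?_
  rw [hT.eigenvectorBasis_apply_self_apply, RCLike.inner_apply, map_mul (starRingEnd 𝕜),
    RCLike.conj_ofReal, mul_left_comm, RCLike.mul_conj]
  norm_cast

theorem re_inner_apply_self_le_eigenvalues_mul_norm_sq {i : Fin n} {z : E}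
    (hz : ∀ j < i, (hT.eigenvectorBasis hn).repr z j = 0) :
    re ⟪T z, z⟫_𝕜 ≤ hT.eigenvalues hn i * ‖z‖ ^ 2 := by
  rw [hT.re_inner_apply_self_eq_sum hn, ← (hT.eigenvectorBasis hn).repr.norm_map,
    EuclideanSpace.norm_sq_eq, Finset.mul_sum]
  refine Finset.sum_le_sum fun j _ => ?_
  rcases lt_or_ge j i with hji | hij
  · simp [hz j hji]
  · exact mul_le_mul_of_nonneg_right (hT.eigenvalues_antitone hn hij) (by positivity)

theorem le_eigenvalues_of_forall_mem {W : Submodule 𝕜 E} {c : ℝ}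
    (hW : ∀ z ∈ W, c * ‖z‖ ^ 2 ≤ re ⟪T z, z⟫_𝕜) {i : Fin n} (hi : (i : ℕ) < finrank 𝕜 W) :
    c ≤ hT.eigenvalues hn i := by
  by_contra! hlt
  -- a vector of `W` orthogonal to the first `i` eigenvectors has Rayleigh quotient `≤ λᵢ < c`,
  -- so it vanishes and `W` embeds into `𝕜ⁱ`
  let ψ : W →ₗ[𝕜] (Fin i → 𝕜) := LinearMap.funLeft 𝕜 𝕜 (Fin.castLE i.is_le') ∘ₗ
    (WithLp.linearEquiv 2 𝕜 (Fin n → 𝕜)).toLinearMap ∘ₗ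
    (hT.eigenvectorBasis hn).repr.toLinearMap ∘ₗ W.subtype
  have hψ : Function.Injective ψ := by
    refine (injective_iff_map_eq_zero ψ).mpr fun z hz => ?_
    have hcoord : ∀ j < i, (hT.eigenvectorBasis hn).repr z j = 0 := fun j hj =>
      congr_fun hz ⟨j, hj⟩
    have hle := (hW z z.2).trans (hT.re_inner_apply_self_le_eigenvalues_mul_norm_sq hn hcoord)
    have hnorm : ‖(z : E)‖ ^ 2 ≤ 0 := by nlinarith [sq_nonneg ‖(z : E)‖]
    simpa using hnorm
  have := LinearMap.finrank_le_finrank_of_injective hψ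
  rw [Module.finrank_fin_fun] at this
  omega

end LinearMap.IsSymmetric

theorem Matrix.IsHermitian.le_eigenvalues₀_of_forall_mem {n : Type*} [Fintype n] [DecidableEq n]
    {A : Matrix n n ℝ} (hA : A.IsHermitian) {W : Submodule ℝ (n → ℝ)} {c : ℝ}
    (hW : ∀ z ∈ W, c * (z ⬝ᵥ z) ≤ z ⬝ᵥ (A *ᵥ z)) {i : Fin (Fintype.card n)}
    (hi : (i : ℕ) < finrank ℝ W) : c ≤ hA.eigenvalues₀ i := by
  let e : (n → ℝ) ≃ₗ[ℝ] EuclideanSpace ℝ n := (WithLp.linearEquiv 2 ℝ (n → ℝ)).symm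
  refine (isSymmetric_toEuclideanLin_iff.mpr hA).le_eigenvalues_of_forall_mem _
    (W := W.map e.toLinearMap) ?_ (by rwa [LinearEquiv.finrank_map_eq])
  rintro _ ⟨z, hz, rfl⟩
  rw [← real_inner_self_eq_norm_sq, EuclideanSpace.inner_eq_star_dotProduct,
    EuclideanSpace.inner_eq_star_dotProduct]
  simpa [e, toLpLin_apply, dotProduct_comm (A *ᵥ z)] using hW z hz

namespace SimpleGraph

variable {V : Type*} [Fintype V] (G : SimpleGraph V) [DecidableRel G.Adj]

theorem sum_neighborFinset_sq_of_eq {u : V} {z : V → ℝ} {p q : ℝ} (hu : z u = p)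
    (hN : ∀ w, G.Adj u w → z w = q) :
    ∑ w ∈ G.neighborFinset u, (z u - z w) ^ 2 = G.degree u * (p - q) ^ 2 := by
  rw [Finset.sum_congr rfl fun w hw => by rw [hu, hN w ((G.mem_neighborFinset u w).mp hw)],
    Finset.sum_const, card_neighborFinset_eq_degree, nsmul_eq_mul]

variable [DecidableEq V]

theorem lapSpectrum_eq_map_eigenvalues₀ :
    lapSpectrum G = Multiset.map (G.isHermitian_lapMatrix ℝ).eigenvalues₀ Finset.univ.val := by
  rw [lapSpectrum]
  convert (G.isHermitian_lapMatrix ℝ).roots_charpoly_eq_eigenvalues₀ using 3 <;> congr!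

theorem lapEigs_eq_ofFn : lapEigs G = List.ofFn (G.isHermitian_lapMatrix ℝ).eigenvalues₀ := by
  refine List.Perm.eq_of_sortedGE ?_
    (G.isHermitian_lapMatrix ℝ).eigenvalues₀_antitone.sortedGE_ofFn ?_
  · exact (List.sortedLE_iff_pairwise.mpr (Multiset.pairwise_sort _ _)).reverse
  · rw [← Multiset.coe_eq_coe, lapEigs, Multiset.coe_reverse, Multiset.sort_eq,
      lapSpectrum_eq_map_eigenvalues₀, Fin.univ_val_map]

theorem lapEig_succ (k : Fin (Fintype.card V)) :
    lapEig G (k + 1) = (G.isHermitian_lapMatrix ℝ).eigenvalues₀ k := by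
  simp [lapEig, lapEigs_eq_ofFn]

/-- Since `S` is independent, no edge is counted twice on the left. -/
theorem sum_sum_neighborFinset_sq_le_lapMatrix {S : Finset V}
    (hS : ∀ i ∈ S, ∀ j ∈ S, ¬G.Adj i j) (z : V → ℝ) :
    ∑ i ∈ S, ∑ j ∈ G.neighborFinset i, (z i - z j) ^ 2 ≤ z ⬝ᵥ (G.lapMatrix ℝ *ᵥ z) := by
  set f : V → V → ℝ := fun i j => if G.Adj i j then (z i - z j) ^ 2 else 0 with hf
  set s : V → ℝ := fun i => if i ∈ S then 1 else 0 with hs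
  have hrow : ∀ i, ∑ j ∈ G.neighborFinset i, (z i - z j) ^ 2 = ∑ j, f i j := fun i => by
    simp [hf, neighborFinset_eq_filter, Finset.sum_filter]
  have hpoint : ∀ i j, (s i + s j) * f i j ≤ f i j := fun i j => by
    by_cases hij : G.Adj i j
    · have : s i + s j ≤ 1 := by
        by_cases hi : i ∈ S <;> by_cases hj : j ∈ S
        · exact absurd hij (hS i hi j hj)
        all_goals simp [hs, hi, hj]
      simp only [hf, if_pos hij]
      nlinarith [sq_nonneg (z i - z j)]
    · simp [hf, hij]
  have hsymm : ∀ i j, f j i = f i j := fun i j => by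
    simp only [hf, G.adj_comm j i]; ring_nf
  calc ∑ i ∈ S, ∑ j ∈ G.neighborFinset i, (z i - z j) ^ 2
      = (∑ i, ∑ j, (s i + s j) * f i j) / 2 := by
        simp_rw [add_mul, Finset.sum_add_distrib]
        rw [Finset.sum_comm (f := fun i j => s j * f i j)]
        simp_rw [hsymm, ← Finset.mul_sum, hs, ite_mul, one_mul, zero_mul, ← Finset.sum_filter,
          Finset.filter_mem_eq_inter, Finset.univ_inter, hrow]
        ring
    _ ≤ (∑ i, ∑ j, f i j) / 2 := by
        gcongr with i _ j _
        exact hpoint i j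
    _ = z ⬝ᵥ (G.lapMatrix ℝ *ᵥ z) := by
        rw [← G.lapMatrix_toLinearMap₂' ℝ z, toLinearMap₂'_apply']

def starVec (u : V) : V → ℝ :=
  fun w => if w = u then (G.degree u : ℝ) else if G.Adj u w then -1 else 0

variable {G}

@[simp]
theorem starVec_self (u : V) : G.starVec u u = G.degree u := by simp [starVec]

theorem starVec_of_adj {u w : V} (h : G.Adj u w) : G.starVec u w = -1 := by
  simp [starVec, h, h.ne']

theorem starVec_of_ne_of_not_adj {u w : V} (hne : w ≠ u) (h : ¬G.Adj u w) : G.starVec u w = 0 := by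
  simp [starVec, hne, h]

theorem starVec_dotProduct_self (u : V) :
    G.starVec u ⬝ᵥ G.starVec u = G.degree u * (G.degree u + 1) := by
  have : ∀ w, G.starVec u w * G.starVec u w =
      (if w = u then (G.degree u : ℝ) ^ 2 else 0) + (if G.Adj u w then 1 else 0) := fun w => by
    by_cases hw : w = u
    · subst hw; simp [sq]
    · by_cases h : G.Adj u w <;> simp [starVec, hw, h]
  simp_rw [dotProduct, this, Finset.sum_add_distrib, Finset.sum_ite_eq', Finset.mem_univ, if_true,
    ← G.degree_eq_sum_if_adj]
  ring

theorem starVec_eq_zero_of_adj {u v w : V} (hadj : ¬G.Adj u v)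
    (hcom : ∀ w, ¬(G.Adj u w ∧ G.Adj v w)) (huw : G.Adj u w) : G.starVec v w = 0 :=
  starVec_of_ne_of_not_adj (fun hwv => hadj (hwv ▸ huw)) fun hvw => hcom w ⟨huw, hvw⟩

theorem starVec_apply_of_ne_of_not_adj {u v : V} (hvu : v ≠ u) (hadj : ¬G.Adj u v) :
    G.starVec u v = 0 ∧ G.starVec v u = 0 :=
  ⟨starVec_of_ne_of_not_adj hvu hadj, starVec_of_ne_of_not_adj hvu.symm (mt G.adj_symm hadj)⟩

theorem linearIndependent_starVec_pair {u v : V} (hvu : v ≠ u) (hadj : ¬G.Adj u v)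
    (hu : 0 < G.degree u) (hv : 0 < G.degree v) :
    LinearIndependent ℝ ![G.starVec u, G.starVec v] := by
  obtain ⟨hxv, hyu⟩ := starVec_apply_of_ne_of_not_adj hvu hadj
  refine LinearIndependent.pair_iff.mpr fun a b hab => ⟨?_, ?_⟩
  · simpa [hyu, hu.ne'] using congr_fun hab u
  · simpa [hxv, hv.ne'] using congr_fun hab v

theorem starVec_dotProduct_starVec_eq_zero {u v : V} (hvu : v ≠ u) (hadj : ¬G.Adj u v)
    (hcom : ∀ w, ¬(G.Adj u w ∧ G.Adj v w)) : G.starVec u ⬝ᵥ G.starVec v = 0 := by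
  refine Finset.sum_eq_zero fun w _ => ?_
  by_cases hwu : w = u
  · simp [hwu, (starVec_apply_of_ne_of_not_adj hvu hadj).2]
  by_cases huw : G.Adj u w
  · simp [starVec_eq_zero_of_adj hadj hcom huw]
  · simp [starVec_of_ne_of_not_adj hwu huw]

theorem mul_dotProduct_self_le_lapMatrix_of_mem_span {u v : V} (hvu : v ≠ u) (hadj : ¬G.Adj u v)
    (hcom : ∀ w, ¬(G.Adj u w ∧ G.Adj v w)) (hdeg : G.degree v ≤ G.degree u)
    {z : V → ℝ} (hz : z ∈ Submodule.span ℝ {G.starVec u, G.starVec v}) :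
    (G.degree v + 1 : ℝ) * (z ⬝ᵥ z) ≤ z ⬝ᵥ (G.lapMatrix ℝ *ᵥ z) := by
  obtain ⟨a, b, rfl⟩ := Submodule.mem_span_pair.mp hz
  obtain ⟨hxv, hyu⟩ := starVec_apply_of_ne_of_not_adj hvu hadj
  have hnorm : (a • G.starVec u + b • G.starVec v) ⬝ᵥ (a • G.starVec u + b • G.starVec v) =
      a ^ 2 * (G.degree u * (G.degree u + 1)) + b ^ 2 * (G.degree v * (G.degree v + 1)) := by
    simp only [add_dotProduct, dotProduct_add, smul_dotProduct, dotProduct_smul, smul_eq_mul,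
      starVec_dotProduct_self, starVec_dotProduct_starVec_eq_zero hvu hadj hcom,
      dotProduct_comm (G.starVec v)]
    ring
  have hstar_u := G.sum_neighborFinset_sq_of_eq (u := u) (z := a • G.starVec u + b • G.starVec v)
    (p := a * G.degree u) (q := -a) (by simp [hyu]) fun w huw => by
      simp [starVec_of_adj huw, starVec_eq_zero_of_adj hadj hcom huw]
  have hstar_v := G.sum_neighborFinset_sq_of_eq (u := v) (z := a • G.starVec u + b • G.starVec v)
    (p := b * G.degree v) (q := -b) (by simp [hxv]) fun w hvw => by
      simp [starVec_of_adj hvw,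
        starVec_eq_zero_of_adj (mt G.adj_symm hadj) (fun w h => hcom w h.symm) hvw]
  have hquad := G.sum_sum_neighborFinset_sq_le_lapMatrix (S := {u, v})
    (by simp [hadj, mt G.adj_symm hadj]) (a • G.starVec u + b • G.starVec v)
  rw [Finset.sum_pair hvu.symm, hstar_u, hstar_v] at hquad
  have hdeg' : (G.degree v : ℝ) ≤ G.degree u := by exact_mod_cast hdeg
  rw [hnorm]
  nlinarith [mul_nonneg (mul_nonneg (sq_nonneg a) (Nat.cast_nonneg (G.degree u)))
    (sub_nonneg.mpr hdeg'), sq_nonneg b]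

end SimpleGraph

theorem lapEig_two_ge_general {V : Type*} [Fintype V] (G : SimpleGraph V) [DecidableRel G.Adj]
    (hc : G.Connected) (u v : V)
    (hu : ∀ w, G.degree w ≤ G.degree u)
    (hvu : v ≠ u)
    (hadj : ¬ G.Adj u v) (hcom : ∀ w, ¬(G.Adj u w ∧ G.Adj v w)) :
    (G.degree v : ℝ) + 1 ≤ lapEig G 2 := by
  classical
  have : Nontrivial V := ⟨⟨u, v, hvu.symm⟩⟩
  have hdeg := hc.preconnected.degree_pos_of_nontrivial (G := G)
  have hrank : finrank ℝ (Submodule.span ℝ {G.starVec u, G.starVec v}) = 2 := by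
    rw [← Matrix.range_cons_cons_empty _ _ ![],
      finrank_span_eq_card (G.linearIndependent_starVec_pair hvu hadj (hdeg u) (hdeg v)),
      Fintype.card_fin]
  have := (G.isHermitian_lapMatrix ℝ).le_eigenvalues₀_of_forall_mem
    (fun z hz => G.mul_dotProduct_self_le_lapMatrix_of_mem_span hvu hadj hcom (hu v) hz)
    (i := ⟨1, Fintype.one_lt_card⟩) (by simp [hrank])
  rwa [← G.lapEig_succ] at this

/-- If `u` has maximum degree, `v` has second largest degree `d₂`, `u` and `v` are not
adjacent and have no common neighbor, then `μ₂(G) ≥ d₂ + 1`. -/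
theorem lapEig_two_ge {V : Type*} [Fintype V] (G : SimpleGraph V) [DecidableRel G.Adj]
    (hn : 3 ≤ Fintype.card V) (hc : G.Connected) (u v : V)
    (hu : ∀ w, G.degree w ≤ G.degree u)
    (hvu : v ≠ u) (hv : ∀ w, w ≠ u → G.degree w ≤ G.degree v)
    (hadj : ¬ G.Adj u v) (hcom : ∀ w, ¬(G.Adj u w ∧ G.Adj v w)) :
    (G.degree v : ℝ) + 1 ≤ lapEig G 2 :=
  lapEig_two_ge_general G hc u v hu hvu hadj hcom
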